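/- Let A = [a_1|…|a_m]^T ∈ ℝ^{m×d} be fixed with rows pairwise non-positively-parallel (a_i/‖a_i‖_∞ ≠ a_j/‖a_j‖_∞ for i ≠ j) and with last two coordinates of each a_i strictly positive. Let N_N^A be the set of balanced parametrizations whose first-layer rows are positive multiples of the corresponding a_i. Then for every B > 0 there exists C_B > 0 such that for all Γ ∈ N_N^A and g ∈ R(N_N^A) there exists Φ ∈ N_N^A with R(Φ) = g and ‖Φ − Γ‖_∞ ≤ C_B · ‖g − R(Γ)‖_{L^∞((−B,B)^d)}^{1/2}. -/

import Mathlib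

/-!
Take `Φ = Θ`. The difference `R(Θ) - R(Γ)` equals `∑ i, max (⟪a i, x⟫) 0 • P i` with
`P i = λᵢ^Θ • cᵢ^Θ - λᵢ^Γ • cᵢ^Γ`. Because the `a i` are pairwise non-proportional, the ridge
functions `max (⟪a i, ·⟫) 0` are linearly independent: each one has a kink along its own
hyperplane, where all the others are smooth. Finite dimensionality then bounds `‖P‖` by a
multiple of the uniform norm of `R(Θ) - R(Γ)` on a ball, and hence by its essential supremum
on the cube. Finally, balancedness `‖cᵢ‖ = λᵢ ‖a i‖` turns a bound `δ` on `‖P i‖` into bounds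
of order `√δ` on `λᵢ^Θ • a i - λᵢ^Γ • a i` and `cᵢ^Θ - cᵢ^Γ`.
-/

open MeasureTheory Matrix Metric

theorem LinearMap.exists_forall_apply_ne_zero {𝕜 V W ι : Type*} [Field 𝕜] [Infinite 𝕜]
    [AddCommGroup V] [Module 𝕜 V] [AddCommGroup W] [Module 𝕜 W] [Finite ι]
    (g : ι → V →ₗ[𝕜] W) (hg : ∀ j, g j ≠ 0) : ∃ y, ∀ j, g j y ≠ 0 := by
  have hcover : ⋃ j, (LinearMap.ker (g j) : Set V) ≠ Set.univ := fun h => by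
    obtain ⟨j, hj⟩ := Subspace.exists_eq_top_of_iUnion_eq_univ h
    exact hg j (LinearMap.ker_eq_top.1 hj)
  obtain ⟨y, hy⟩ := (Set.ne_univ_iff_exists_notMem _).1 hcover
  exact ⟨y, fun j hj => hy (Set.mem_iUnion.2 ⟨j, hj⟩)⟩

theorem LinearMap.exists_mem_ker_forall_apply_ne_zero {𝕜 V W W' ι : Type*} [Field 𝕜]
    [Infinite 𝕜] [AddCommGroup V] [Module 𝕜 V] [AddCommGroup W] [Module 𝕜 W]
    [AddCommGroup W'] [Module 𝕜 W'] [Finite ι] (f : V →ₗ[𝕜] W') (g : ι → V →ₗ[𝕜] W)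
    (h : ∀ j, ¬ LinearMap.ker f ≤ LinearMap.ker (g j)) :
    ∃ y, f y = 0 ∧ ∀ j, g j y ≠ 0 := by
  obtain ⟨y, hy⟩ := exists_forall_apply_ne_zero (fun j => (g j).comp (LinearMap.ker f).subtype)
    fun j => by rw [Ne, ← LinearMap.le_ker_iff_comp_subtype_eq_zero]; exact h j
  exact ⟨y, y.2, hy⟩

theorem LinearMap.exists_eq_smul_of_ker_le {𝕜 V : Type*} [Field 𝕜] [AddCommGroup V]
    [Module 𝕜 V] {f g : V →ₗ[𝕜] 𝕜} (h : LinearMap.ker f ≤ LinearMap.ker g) :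
    ∃ μ : 𝕜, g = μ • f := by
  have hspan := mem_span_of_iInf_ker_le_ker (ι := Unit) (L := fun _ => f) (by simpa using h)
  rw [Set.range_const, Submodule.mem_span_singleton] at hspan
  obtain ⟨μ, hμ⟩ := hspan
  exact ⟨μ, hμ.symm⟩

theorem max_zero_eq_add_abs_div_two (t : ℝ) : max t 0 = (t + |t|) / 2 := by
  rcases le_total t 0 with ht | ht
  · rw [max_eq_right ht, abs_of_nonpos ht]; ring
  · rw [max_eq_left ht, abs_of_nonneg ht]; ring

theorem differentiableAt_max_zero {s : ℝ} (hs : s ≠ 0) :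
    DifferentiableAt ℝ (fun t : ℝ => max t 0) s := by
  simp only [max_zero_eq_add_abs_div_two]
  exact (differentiableAt_id.add (differentiableAt_abs hs)).div_const 2

theorem not_differentiableAt_max_zero : ¬ DifferentiableAt ℝ (fun t : ℝ => max t 0) 0 := by
  intro h
  have habs : (abs : ℝ → ℝ) = fun t => 2 * max t 0 - t := by
    funext t; rw [max_zero_eq_add_abs_div_two]; ring
  exact not_differentiableAt_abs_zero (habs ▸ (h.const_mul 2).sub differentiableAt_id)

open Finset in
theorem linearIndependent_max_zero {E ι : Type*} [AddCommGroup E] [Module ℝ E] [Fintype ι]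
    (f : ι → E →ₗ[ℝ] ℝ) (hf : ∀ i, f i ≠ 0)
    (hker : Pairwise fun i j => ¬ LinearMap.ker (f i) ≤ LinearMap.ker (f j)) :
    LinearIndependent ℝ fun i (x : E) => max (f i x) 0 := by
  classical
  rw [Fintype.linearIndependent_iff]
  intro w hw i
  obtain ⟨y, hyi, hyj⟩ := LinearMap.exists_mem_ker_forall_apply_ne_zero (f i)
    (fun j : {j // j ≠ i} => f j) fun j => hker (Ne.symm j.2)
  obtain ⟨v, hv⟩ : ∃ v, f i v = 1 := by
    obtain ⟨v, hv⟩ : ∃ v, f i v ≠ 0 := not_forall.1 fun h => hf i (LinearMap.ext h)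
    exact ⟨(f i v)⁻¹ • v, by simp [hv]⟩
  -- On the line `y + t • v` the `i`-th ridge function is `max t 0`, while the others are
  -- smooth at `t = 0`; so `w i ≠ 0` would make `max t 0` differentiable at `0`.
  have hline : (fun t : ℝ => w i * max t 0) =
      fun t => -∑ j ∈ univ.erase i, w j * max (f j y + t * f j v) 0 := by
    funext t
    have h := congrFun hw (y + t • v)
    simp only [Finset.sum_apply, Pi.smul_apply, smul_eq_mul, map_add, map_smul, Pi.zero_apply] at h
    rw [← add_sum_erase _ _ (mem_univ i), hyi, hv, zero_add, mul_one] at h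
    linear_combination h
  by_contra hwi
  refine not_differentiableAt_max_zero ?_
  have hdiff : DifferentiableAt ℝ (fun t : ℝ => w i * max t 0) 0 := by
    rw [hline]
    refine (DifferentiableAt.fun_sum fun j hj => ?_).neg
    have hj : f j y ≠ 0 := hyj ⟨j, ne_of_mem_erase hj⟩
    refine (differentiableAt_const _).mul ((differentiableAt_max_zero ?_).comp (0 : ℝ) ?_)
    · simpa using hj
    · fun_prop
  simpa [hwi] using hdiff.const_mul (w i)⁻¹

theorem linearIndependent_max_zero_dotProduct {ι n : Type*} [Fintype ι] [Fintype n]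
    (a : ι → n → ℝ) {e : n} (he : ∀ i, 0 < a i e)
    (hpar : Pairwise fun i j => NormedSpace.normalize (a i) ≠ NormedSpace.normalize (a j)) :
    LinearIndependent ℝ fun i (x : n → ℝ) => max (a i ⬝ᵥ x) 0 := by
  classical
  let f i := dotProductEquiv ℝ n (a i)
  have hf : ∀ i, f i ≠ 0 := fun i h => (he i).ne' <| by
    simpa using congrFun ((dotProductEquiv ℝ n).map_eq_zero_iff.1 h) e
  have hker : Pairwise fun i j => ¬ LinearMap.ker (f i) ≤ LinearMap.ker (f j) := by
    intro i j hij hle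
    obtain ⟨μ, hμ⟩ := LinearMap.exists_eq_smul_of_ker_le hle
    have haj : a j = μ • a i := (dotProductEquiv ℝ n).injective (by simpa [f] using hμ)
    have hμ : 0 < μ := pos_of_mul_pos_left (by simpa [haj] using he j) (he i).le
    exact hpar hij (by rw [haj, NormedSpace.normalize_smul_of_pos hμ])
  simpa [f] using linearIndependent_max_zero f hf hker

theorem LinearIndependent.exists_pos_mul_norm_le {ι 𝕜 F : Type*} [Fintype ι]
    [NontriviallyNormedField 𝕜] [CompleteSpace 𝕜] [NormedAddCommGroup F] [NormedSpace 𝕜 F]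
    {v : ι → F} (hv : LinearIndependent 𝕜 v) :
    ∃ c > 0, ∀ w : ι → 𝕜, c * ‖w‖ ≤ ‖∑ i, w i • v i‖ := by
  obtain ⟨K, -, hK⟩ := (Fintype.linearCombination 𝕜 v).injective_iff_antilipschitz.1
    hv.fintypeLinearCombination_injective
  simpa [Fintype.linearCombination_apply] using antilipschitzWith_iff_exists_mul_le_norm.1 ⟨K, hK⟩

theorem sum_mul_max_zero_smul {ι E : Type*} [Fintype ι] [AddCommGroup E] [Module ℝ E]
    (f : ι → E →ₗ[ℝ] ℝ) (w : ι → ℝ) {t : ℝ} (ht : 0 ≤ t) (x : E) :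
    ∑ i, w i * max (f i (t • x)) 0 = t * ∑ i, w i * max (f i x) 0 := by
  simp only [map_smul, smul_eq_mul, Finset.mul_sum]
  refine Finset.sum_congr rfl fun i _ => ?_
  rw [mul_left_comm, mul_max_of_nonneg _ _ ht, mul_zero]

theorem exists_pos_mul_norm_le_of_forall_closedBall {ι E : Type*} [Fintype ι]
    [NormedAddCommGroup E] [NormedSpace ℝ E] [FiniteDimensional ℝ E]
    (f : ι → E →ₗ[ℝ] ℝ) (hf : LinearIndependent ℝ fun i (x : E) => max (f i x) 0)
    {r : ℝ} (hr : 0 < r) :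
    ∃ c > 0, ∀ (w : ι → ℝ) (M : ℝ),
      (∀ x ∈ closedBall (0 : E) r, |∑ i, w i * max (f i x) 0| ≤ M) → c * ‖w‖ ≤ M := by
  have hcont : ∀ i, Continuous fun x : E => max (f i x) 0 := fun i =>
    (f i).continuous_of_finiteDimensional.max continuous_const
  let v : ι → C(closedBall (0 : E) r, ℝ) := fun i => ⟨fun x => max (f i x) 0, by fun_prop⟩
  have hv : LinearIndependent ℝ v := by
    rw [Fintype.linearIndependent_iff] at hf ⊢
    intro w hw
    refine hf w (funext fun x => ?_)
    -- rescale `x` into the ball, by positive homogeneity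
    set t := r / (‖x‖ + 1)
    have ht : 0 < t := by positivity
    have htx : t • x ∈ closedBall (0 : E) r := by
      rw [mem_closedBall_zero_iff, norm_smul, Real.norm_of_nonneg ht.le, div_mul_eq_mul_div,
        div_le_iff₀ (by positivity)]
      nlinarith [norm_nonneg x]
    have h0 := congrArg (fun g : C(closedBall (0 : E) r, ℝ) => g ⟨t • x, htx⟩) hw
    simp only [ContinuousMap.sum_apply, ContinuousMap.smul_apply, ContinuousMap.coe_mk,
      ContinuousMap.zero_apply, smul_eq_mul, v] at h0
    rw [sum_mul_max_zero_smul f w ht.le] at h0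
    simpa [ht.ne'] using h0
  obtain ⟨c, hc, hcw⟩ := hv.exists_pos_mul_norm_le
  refine ⟨c, hc, fun w M hM => (hcw w).trans ?_⟩
  have : Nonempty (closedBall (0 : E) r) := ⟨⟨0, mem_closedBall_self hr.le⟩⟩
  refine (ContinuousMap.norm_le_of_nonempty _).2 fun x => ?_
  simpa [v] using hM x x.2

theorem le_essSup_restrict_of_continuousOn {X : Type*} [TopologicalSpace X] [MeasurableSpace X]
    [OpensMeasurableSpace X] {μ : Measure X} [μ.IsOpenPosMeasure] {U : Set X} (hU : IsOpen U)
    {g : X → ℝ} (hg : ContinuousOn g U) (hbdd : BddAbove (g '' U)) {x : X} (hx : x ∈ U) :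
    g x ≤ essSup g (μ.restrict U) := by
  obtain ⟨M, hM⟩ := hbdd
  have hbdd' : Filter.IsBoundedUnder (· ≤ ·) (ae (μ.restrict U)) g :=
    ⟨M, Filter.eventually_map.2 <| (ae_restrict_mem hU.measurableSet).mono fun y hy =>
      hM ⟨y, hy, rfl⟩⟩
  refine le_of_forall_lt fun s hs => ?_
  by_contra! hle
  -- `g > s` on a nonempty open subset of `U`, which is not null
  have hV : IsOpen (U ∩ g ⁻¹' Set.Ioi s) := hg.isOpen_inter_preimage hU isOpen_Ioi
  have hnull : μ.restrict U (U ∩ g ⁻¹' Set.Ioi s) = 0 :=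
    measure_mono_null (fun y hy => not_le.2 (hle.trans_lt hy.2)) (ae_iff.1 (ae_le_essSup hbdd'))
  rw [Measure.restrict_apply hV.measurableSet, Set.inter_right_comm, Set.inter_self] at hnull
  exact (hV.measure_pos μ ⟨x, hx, hs⟩).ne' hnull

theorem iSup_abs_eq_norm {ι : Type*} [Fintype ι] (v : ι → ℝ) : ⨆ i, |v i| = ‖v‖ := by
  refine le_antisymm (Real.iSup_le (fun i => ?_) (norm_nonneg v)) ?_
  · simpa using norm_le_pi_norm v i
  · refine (pi_norm_le_iff_of_nonneg (Real.iSup_nonneg fun i => abs_nonneg _)).2 fun i => ?_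
    simpa using le_ciSup (Set.finite_range fun i => |v i|).bddAbove i

theorem exists_pos_mul_norm_le_essSup {ι n κ : Type*} [Fintype ι] [Fintype n] [Fintype κ]
    (a : ι → n → ℝ) (ha : LinearIndependent ℝ fun i (x : n → ℝ) => max (a i ⬝ᵥ x) 0)
    {B : ℝ} (hB : 0 < B) :
    ∃ c > 0, ∀ P : ι → κ → ℝ, c * ‖P‖ ≤
      essSup (fun x => ⨆ j, |∑ i, P i j * max (a i ⬝ᵥ x) 0|) (volume.restrict (ball 0 B)) := by
  classical
  obtain ⟨c, hc, hcw⟩ := exists_pos_mul_norm_le_of_forall_closedBall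
    (fun i => dotProductEquiv ℝ n (a i)) (by simpa using ha) (half_pos hB)
  refine ⟨c, hc, fun P => ?_⟩
  set G := fun x : n → ℝ => ⨆ j, |∑ i, P i j * max (a i ⬝ᵥ x) 0|
  have hGcont : Continuous G := by
    simp only [G, iSup_abs_eq_norm]
    fun_prop
  have hGbdd : BddAbove (G '' ball 0 B) :=
    ((isCompact_closedBall 0 B).bddAbove_image hGcont.continuousOn).mono
      (Set.image_mono ball_subset_closedBall)
  have hG : ∀ x ∈ ball (0 : n → ℝ) B, G x ≤ essSup G (volume.restrict (ball 0 B)) :=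
    fun x hx => le_essSup_restrict_of_continuousOn isOpen_ball hGcont.continuousOn hGbdd hx
  have hcol : ∀ j, c * ‖fun i => P i j‖ ≤ essSup G (volume.restrict (ball 0 B)) :=
    fun j => hcw _ _ fun x hx => (le_ciSup (Set.finite_range _).bddAbove j).trans
      (hG x (closedBall_subset_ball (half_lt_self hB) hx))
  have hE : 0 ≤ essSup G (volume.restrict (ball 0 B)) :=
    (Real.iSup_nonneg fun _ => abs_nonneg _).trans (hG 0 (mem_ball_self hB))
  rw [← le_div_iff₀' hc, pi_norm_le_iff_of_nonneg (by positivity)]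
  refine fun i => (pi_norm_le_iff_of_nonneg (by positivity)).2 fun j => ?_
  exact (norm_le_pi_norm (fun i => P i j) i).trans ((le_div_iff₀' hc).2 (hcol j))

section Balanced

variable {E F : Type*} [NormedAddCommGroup E] [NormedSpace ℝ E] [NormedAddCommGroup F]
  [NormedSpace ℝ F] {a : E} {c₁ c₂ : F} {r₁ r₂ : ℝ}

theorem norm_smul_sub_smul_le_sqrt (hr₁ : 0 ≤ r₁) (hr₂ : 0 ≤ r₂) (hc₁ : ‖c₁‖ = ‖r₁ • a‖)
    (hc₂ : ‖c₂‖ = ‖r₂ • a‖) : ‖r₁ • a - r₂ • a‖ ≤ √(‖a‖ * ‖r₁ • c₁ - r₂ • c₂‖) := by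
  rw [norm_smul, Real.norm_of_nonneg hr₁] at hc₁
  rw [norm_smul, Real.norm_of_nonneg hr₂] at hc₂
  have hdiff : |r₁ ^ 2 - r₂ ^ 2| * ‖a‖ ≤ ‖r₁ • c₁ - r₂ • c₂‖ := by
    refine le_trans (le_of_eq ?_) (abs_norm_sub_norm_le _ _)
    rw [norm_smul, norm_smul, Real.norm_of_nonneg hr₁, Real.norm_of_nonneg hr₂, hc₁, hc₂,
      show r₁ * (r₁ * ‖a‖) - r₂ * (r₂ * ‖a‖) = (r₁ ^ 2 - r₂ ^ 2) * ‖a‖ by ring, abs_mul,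
      abs_norm]
  have hsq : (r₁ - r₂) ^ 2 ≤ |r₁ ^ 2 - r₂ ^ 2| := by
    rw [sq_sub_sq, abs_mul, abs_of_nonneg (add_nonneg hr₁ hr₂), ← sq_abs]
    have : |r₁ - r₂| ≤ r₁ + r₂ := abs_sub_le_iff.2 ⟨by linarith, by linarith⟩
    rw [sq, mul_comm (r₁ + r₂)]
    exact mul_le_mul_of_nonneg_left this (abs_nonneg _)
  rw [← sub_smul, norm_smul, Real.norm_eq_abs]
  refine Real.le_sqrt_of_sq_le ?_
  calc (|r₁ - r₂| * ‖a‖) ^ 2 = (r₁ - r₂) ^ 2 * ‖a‖ * ‖a‖ := by rw [mul_pow, sq_abs]; ring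
    _ ≤ |r₁ ^ 2 - r₂ ^ 2| * ‖a‖ * ‖a‖ := by gcongr
    _ ≤ ‖a‖ * ‖r₁ • c₁ - r₂ • c₂‖ := by rw [mul_comm]; gcongr

theorem norm_sub_le_three_mul_sqrt (hr₁ : 0 < r₁) (hr₂ : 0 < r₂) (hc₁ : ‖c₁‖ = ‖r₁ • a‖)
    (hc₂ : ‖c₂‖ = ‖r₂ • a‖) : ‖c₁ - c₂‖ ≤ 3 * √(‖a‖ * ‖r₁ • c₁ - r₂ • c₂‖) := by
  have hfirst := norm_smul_sub_smul_le_sqrt hr₁.le hr₂.le hc₁ hc₂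
  rw [← sub_smul, norm_smul, Real.norm_eq_abs] at hfirst
  rw [norm_smul, Real.norm_of_nonneg hr₁.le] at hc₁
  rw [norm_smul, Real.norm_of_nonneg hr₂.le] at hc₂
  set δ := ‖r₁ • c₁ - r₂ • c₂‖
  set s := r₁ + r₂
  have hs : 0 < s := add_pos hr₁ hr₂
  have hsum : s * ‖c₁ - c₂‖ ≤ 2 * δ + |r₁ - r₂| * (s * ‖a‖) := by
    have hid : s • (c₁ - c₂) = (2 : ℝ) • (r₁ • c₁ - r₂ • c₂) + (r₂ - r₁) • (c₁ + c₂) := by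
      simp only [s]; module
    have hc : ‖c₁ + c₂‖ ≤ s * ‖a‖ := (norm_add_le _ _).trans (by rw [hc₁, hc₂, add_mul])
    calc s * ‖c₁ - c₂‖ = ‖s • (c₁ - c₂)‖ := by rw [norm_smul, Real.norm_of_nonneg hs.le]
      _ ≤ 2 * δ + |r₁ - r₂| * (s * ‖a‖) := by
        rw [hid, abs_sub_comm]
        refine (norm_add_le _ _).trans (add_le_add ?_ ?_) <;> rw [norm_smul, Real.norm_eq_abs]
        · rw [abs_two]
        · gcongr
  have hδ : δ ≤ s * √(‖a‖ * δ) := by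
    have hδs : δ ≤ s ^ 2 * ‖a‖ := by
      calc δ ≤ ‖r₁ • c₁‖ + ‖r₂ • c₂‖ := norm_sub_le _ _
        _ = (r₁ ^ 2 + r₂ ^ 2) * ‖a‖ := by
          rw [norm_smul, norm_smul, Real.norm_of_nonneg hr₁.le, Real.norm_of_nonneg hr₂.le,
            hc₁, hc₂]
          ring
        _ ≤ s ^ 2 * ‖a‖ := by gcongr; nlinarith
    rw [← Real.sqrt_sq hs.le, ← Real.sqrt_mul (sq_nonneg s)]
    refine Real.le_sqrt_of_sq_le ?_
    calc δ ^ 2 = δ * δ := sq δ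
      _ ≤ s ^ 2 * ‖a‖ * δ := by gcongr
      _ = s ^ 2 * (‖a‖ * δ) := by ring
  have : s * ‖c₁ - c₂‖ ≤ s * (3 * √(‖a‖ * δ)) := by nlinarith
  exact le_of_mul_le_mul_left this hs

end Balanced

theorem sum_mul_max_smul_dotProduct_sub {ι n κ : Type*} [Fintype ι] [Fintype n]
    (a : ι → n → ℝ) {r r' : ι → ℝ} (hr : ∀ i, 0 ≤ r i) (hr' : ∀ i, 0 ≤ r' i)
    (c c' : ι → κ → ℝ) (x : n → ℝ) (j : κ) :
    (∑ i, c i j * max (∑ l, (r i • a i) l * x l) 0) -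
        ∑ i, c' i j * max (∑ l, (r' i • a i) l * x l) 0 =
      ∑ i, (r i • c i - r' i • c' i) j * max (a i ⬝ᵥ x) 0 := by
  have hmax : ∀ {s : ℝ}, 0 ≤ s → ∀ i, max (∑ l, (s • a i) l * x l) 0 = s * max (a i ⬝ᵥ x) 0 :=
    fun {s} hs i => by
      rw [mul_max_of_nonneg _ _ hs, mul_zero, ← smul_eq_mul, ← smul_dotProduct]; rfl
  simp only [hmax (hr _), hmax (hr' _), ← Finset.sum_sub_distrib]
  refine Finset.sum_congr rfl fun i _ => ?_
  simp only [Pi.sub_apply, Pi.smul_apply, smul_eq_mul]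
  ring

theorem setOf_forall_mem_Ioo_eq_ball {ι : Type*} [Fintype ι] {B : ℝ} (hB : 0 < B) :
    {x : ι → ℝ | ∀ l, x l ∈ Set.Ioo (-B) B} = ball 0 B := by
  ext x
  simp [ball_pi _ hB, Real.ball_eq_Ioo]

/-- Inverse stability w.r.t. the uniform norm on `(−B,B)^d` for networks with
fixed first-layer directions: on the set `𝒩^A_N` of balanced parametrizations
whose first-layer rows are positive multiples of fixed, pairwise
non-positively-parallel rows `a_i` (with strictly positive last two
coordinates), one has uniform `(C_B, 1/2)` inverse stability w.r.t.
`‖·‖_{L^∞((−B,B)^d)}`. -/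
theorem stmt_17 {d m D : ℕ} (hd : 2 ≤ d)
    (a : Fin m → Fin d → ℝ)
    (hpar : ∀ i j, i ≠ j → ‖a i‖⁻¹ • a i ≠ ‖a j‖⁻¹ • a j)
    (hpos : ∀ i, 0 < a i ⟨d - 1, by omega⟩ ∧ 0 < a i ⟨d - 2, by omega⟩) :
    ∀ B : ℝ, 0 < B → ∃ CB : ℝ, 0 < CB ∧
      ∀ (lamΓ : Fin m → ℝ) (cΓ : Fin m → Fin D → ℝ),
        (∀ i, 0 < lamΓ i) → (∀ i, ‖cΓ i‖ = ‖lamΓ i • a i‖) →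
      ∀ (lamΘ : Fin m → ℝ) (cΘ : Fin m → Fin D → ℝ),
        (∀ i, 0 < lamΘ i) → (∀ i, ‖cΘ i‖ = ‖lamΘ i • a i‖) →
      ∃ (lamΦ : Fin m → ℝ) (cΦ : Fin m → Fin D → ℝ),
        (∀ i, 0 < lamΦ i) ∧ (∀ i, ‖cΦ i‖ = ‖lamΦ i • a i‖) ∧
        (∀ x : Fin d → ℝ, ∀ j : Fin D,
          ∑ i, cΦ i j * max (∑ l, (lamΦ i • a i) l * x l) 0 =
            ∑ i, cΘ i j * max (∑ l, (lamΘ i • a i) l * x l) 0) ∧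
        max (⨆ i, ⨆ l, |(lamΦ i • a i) l - (lamΓ i • a i) l|)
            (⨆ i, ⨆ j, |cΦ i j - cΓ i j|) ≤
          CB * Real.sqrt (essSup (fun x : Fin d → ℝ => ⨆ j : Fin D,
              |(∑ i, cΘ i j * max (∑ l, (lamΘ i • a i) l * x l) 0) -
                ∑ i, cΓ i j * max (∑ l, (lamΓ i • a i) l * x l) 0|)
            (volume.restrict {x : Fin d → ℝ | ∀ l, x l ∈ Set.Ioo (-B) B})) := by
  intro B hB
  obtain ⟨c, hc, hP⟩ := exists_pos_mul_norm_le_essSup (κ := Fin D) a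
    (linearIndependent_max_zero_dotProduct a (fun i => (hpos i).1) hpar) hB
  set Q := (1 + ∑ i, ‖a i‖) / c
  refine ⟨3 * √Q, by positivity, fun lamΓ cΓ hΓ hΓbal lamΘ cΘ hΘ hΘbal =>
    ⟨lamΘ, cΘ, hΘ, hΘbal, fun _ _ => rfl, ?_⟩⟩
  rw [setOf_forall_mem_Ioo_eq_ball hB]
  simp only [sum_mul_max_smul_dotProduct_sub a (fun i => (hΘ i).le) (fun i => (hΓ i).le)]
  set P : Fin m → Fin D → ℝ := fun i => lamΘ i • cΘ i - lamΓ i • cΓ i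
  set E := essSup (fun x => ⨆ j, |∑ i, P i j * max (a i ⬝ᵥ x) 0|) (volume.restrict (ball 0 B))
  have hneuron : ∀ i, √(‖a i‖ * ‖P i‖) ≤ √Q * √E := fun i => by
    have hPi : ‖P i‖ ≤ E / c :=
      (le_div_iff₀' hc).2 <| (mul_le_mul_of_nonneg_left (norm_le_pi_norm P i) hc.le).trans (hP P)
    have hai : ‖a i‖ ≤ 1 + ∑ i, ‖a i‖ :=
      (Finset.single_le_sum (fun i _ => norm_nonneg (a i)) (Finset.mem_univ i)).trans
        (le_add_of_nonneg_left zero_le_one)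
    rw [← Real.sqrt_mul (by positivity)]
    refine Real.sqrt_le_sqrt <| (mul_le_mul hai hPi (norm_nonneg _) (by positivity)).trans_eq ?_
    simp only [Q]; ring
  have hC : 0 ≤ 3 * √Q * √E := by positivity
  refine max_le (Real.iSup_le (fun i => ?_) hC) (Real.iSup_le (fun i => ?_) hC)
  · calc ⨆ l, |(lamΘ i • a i) l - (lamΓ i • a i) l| = ‖lamΘ i • a i - lamΓ i • a i‖ :=
          iSup_abs_eq_norm _
      _ ≤ √(‖a i‖ * ‖P i‖) := norm_smul_sub_smul_le_sqrt (hΘ i).le (hΓ i).le (hΘbal i) (hΓbal i)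
      _ ≤ 3 * √Q * √E := by nlinarith [hneuron i, Real.sqrt_nonneg Q, Real.sqrt_nonneg E]
  · calc ⨆ j, |cΘ i j - cΓ i j| = ‖cΘ i - cΓ i‖ := iSup_abs_eq_norm _
      _ ≤ 3 * √(‖a i‖ * ‖P i‖) := norm_sub_le_three_mul_sqrt (hΘ i) (hΓ i) (hΘbal i) (hΓbal i)
      _ ≤ 3 * √Q * √E := by nlinarith [hneuron i]
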